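/- arXiv:0811.0475 — 5 statements merged into one kernel-verified Lean document; each statement's English description precedes it below -/
import Mathlib

section
/- For every ring element x ∈ R, the statistical distance between S_x^{R,n} and the uniform distribution on R^n × R^n equals the average over uniformly random (v^0,v^1) ∈ R^n × R^n of the statistical distance between the distribution of H_{v^0,v^1}(σ) (for uniform σ ∈ {0,1}^n) and the uniform distribution on R. -/
open Finset

/-- Statistical distance between two real-valued mass functions on a finite type. -/
noncomputable def SD {α : Type} [Fintype α] (P Q : α → ℝ) : ℝ :=
  (∑ a, |P a - Q a|) / 2

/-- The probability mass function of `S_x^{R,n}`: pick uniform `σ ∈ {0,1}ⁿ`,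
uniform `u ∈ Rⁿ` with `∑ u_i = x`, and uniform `(v⁰,v¹)` with `v_i^{σ_i} = u_i`. -/
noncomputable def Sprob (R : Type) [Fintype R] [AddCommGroup R] [DecidableEq R]
    (n : ℕ) (x : R) (v : (Fin n → R) × (Fin n → R)) : ℝ :=
  (∑ σ : Fin n → Bool,
      if (∑ i, if σ i then v.2 i else v.1 i) = x then (1 : ℝ) else 0) /
    (2 ^ n * (Fintype.card R : ℝ) ^ (2 * n - 1))

/-!
Up to the normalising factor `2ⁿ |R|^(2n-1)`, the mass of `S_x` at `v` is the number `c_v(x)` of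
patterns `σ` with `H_v(σ) = x`, so both sides are sums of `|c_v(z)/2ⁿ - 1/|R||`: over `v` with
`z = x` on the left, over `v` and all `z` on the right. Translating `v⁰₀` and `v¹₀` by the same
`d` translates every `H_v(σ)` by `d`, so the sum over `v` does not depend on `z`, and the
`|R|` values of `z` account for the remaining factor `|R|`.
-/

lemma SD_div_const {α : Type} [Fintype α] (P Q : α → ℝ) (c : ℝ) :
    SD (fun a => P a / c) (fun a => Q a / c) = SD P Q / |c| := by
  simp only [SD, ← sub_div, abs_div, ← Finset.sum_div]
  ring

lemma sum_SD_comm {α β : Type} [Fintype α] [Fintype β] (P Q : α → β → ℝ) :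
    ∑ a, SD (P a) (Q a) = ∑ b, SD (fun a => P a b) (fun a => Q a b) := by
  simp only [SD, ← Finset.sum_div]
  rw [Finset.sum_comm]

section PatternSum

variable {R : Type} [Fintype R] [AddCommGroup R] [DecidableEq R] {n : ℕ}

def patternSum (v : (Fin n → R) × (Fin n → R)) (σ : Fin n → Bool) : R :=
  ∑ i, if σ i then v.2 i else v.1 i

def patternCount (v : (Fin n → R) × (Fin n → R)) (z : R) : ℝ :=
  ∑ σ : Fin n → Bool, if patternSum v σ = z then 1 else 0

omit [Fintype R] [DecidableEq R] in
lemma patternSum_add_diag (v : (Fin n → R) × (Fin n → R)) (w : Fin n → R) (σ : Fin n → Bool) :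
    patternSum (v + (w, w)) σ = patternSum v σ + ∑ i, w i := by
  simp only [patternSum, ← Finset.sum_add_distrib]
  refine Finset.sum_congr rfl fun i _ => ?_
  cases σ i <;> rfl

omit [Fintype R] in
lemma patternCount_add_diag (v : (Fin n → R) × (Fin n → R)) (w : Fin n → R) (z : R) :
    patternCount (v + (w, w)) (z + ∑ i, w i) = patternCount v z := by
  simp only [patternCount, patternSum_add_diag, add_left_inj]

lemma sum_comp_patternCount_eq (i₀ : Fin n) (f : ℝ → ℝ) (z z' : R) :
    ∑ v : (Fin n → R) × (Fin n → R), f (patternCount v z)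
      = ∑ v : (Fin n → R) × (Fin n → R), f (patternCount v z') := by
  set w : Fin n → R := Pi.single i₀ (z' - z)
  have hw : z + ∑ i, w i = z' := by simp [w]
  refine Fintype.sum_equiv (Equiv.addRight (w, w)) _ _ fun v => ?_
  rw [Equiv.coe_addRight, ← hw, patternCount_add_diag]

lemma sum_SD_patternCount_const (i₀ : Fin n) (x : R) (q : ℝ) :
    ∑ v : (Fin n → R) × (Fin n → R), SD (fun z => patternCount v z / 2 ^ n) (fun _ => q)
      = Fintype.card R *
          SD (fun v : (Fin n → R) × (Fin n → R) => patternCount v x / 2 ^ n) (fun _ => q) := by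
  rw [sum_SD_comm (fun v z => patternCount v z / 2 ^ n) fun _ _ => q]
  have hz : ∀ z : R, SD (fun v => patternCount v z / 2 ^ n) (fun _ => q)
      = SD (fun v => patternCount v x / 2 ^ n) (fun _ => q) := fun z => by
    simp only [SD]
    rw [sum_comp_patternCount_eq i₀ (fun t => |t / 2 ^ n - q|) z x]
  simp only [hz, Finset.sum_const, Finset.card_univ, nsmul_eq_mul]

end PatternSum

/-- The statistical distance of `S_x^{R,n}` to uniform equals the average over
`(v⁰,v¹)` of the statistical distance of the distribution of `H_{v⁰,v¹}(σ)`
(for uniform `σ`) to the uniform distribution on `R`. -/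
theorem sd_Sx_eq_average_sd_hash
    (R : Type) [Fintype R] [AddCommGroup R] [DecidableEq R]
    (n : ℕ) (hn : 1 ≤ n) (x : R) :
    SD (Sprob R n x)
        (fun _ : (Fin n → R) × (Fin n → R) =>
          1 / (Fintype.card R : ℝ) ^ (2 * n))
    = (∑ v : (Fin n → R) × (Fin n → R),
        SD (fun z : R =>
              (∑ σ : Fin n → Bool,
                if (∑ i, if σ i then v.2 i else v.1 i) = z then (1 : ℝ) else 0)
                / 2 ^ n)
            (fun _ : R => 1 / (Fintype.card R : ℝ)))
        / (Fintype.card R : ℝ) ^ (2 * n) := by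
  set N : ℝ := (Fintype.card R : ℝ) with hN_def
  have hN : 0 < N := Nat.cast_pos.mpr Fintype.card_pos
  have hpow : N ^ (2 * n) = N ^ (2 * n - 1) * N := (pow_sub_one_mul (by omega) N).symm
  have hlhs : SD (Sprob R n x) (fun _ => 1 / N ^ (2 * n))
      = SD (fun v : (Fin n → R) × (Fin n → R) => patternCount v x / 2 ^ n / N ^ (2 * n - 1))
          (fun _ => 1 / N / N ^ (2 * n - 1)) := by
    congr 1
    · funext v; rw [div_div]; rfl
    · funext; rw [div_div, hpow, mul_comm N]
  change _ = (∑ v : (Fin n → R) × (Fin n → R),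
    SD (fun z => patternCount v z / 2 ^ n) fun _ => 1 / N) / N ^ (2 * n)
  rw [hlhs, SD_div_const, sum_SD_patternCount_const ⟨0, hn⟩ x, ← hN_def,
    abs_of_pos (by positivity), hpow]
  field_simp
end

section
/- If n > log₂|R| + k, then for every x ∈ R the statistical distance between the distribution S_x^{R,n} and the uniform distribution on R^n × R^n is at most 2^{-Ω(k)} (concretely, at most (1/2)·2^{-(n - log₂|R|)/2}). -/
open Finset

lemma fiber_card_mul {G H : Type*} [Fintype G] [AddCommGroup G] [Fintype H]
    [AddCommGroup H] [DecidableEq H] (f : G →+ H) (hf : Function.Surjective f) (y : H) :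
    ((univ : Finset G).filter (fun g => f g = y)).card * Fintype.card H = Fintype.card G := by
  have key : ∀ z : H, ((univ : Finset G).filter (fun g => f g = y)).card
      = ((univ : Finset G).filter (fun g => f g = z)).card := by
    intro z
    obtain ⟨d, hd⟩ := hf (z - y)
    apply Finset.card_bij (fun g _ => g + d)
    · intro a ha
      simp only [mem_filter, mem_univ, true_and] at ha ⊢
      rw [map_add, ha, hd]; abel
    · intro a _ b _ hab
      exact add_right_cancel hab
    · intro b hb
      simp only [mem_filter, mem_univ, true_and] at hb
      refine ⟨b - d, ?_, by abel⟩
      simp only [mem_filter, mem_univ, true_and, map_sub, hb, hd]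
      abel
  have hG : Fintype.card G = ∑ z : H, ((univ : Finset G).filter (fun g => f g = z)).card := by
    rw [← Finset.card_univ]
    exact Finset.card_eq_sum_card_fiberwise (fun x _ => mem_univ (f x))
  rw [hG, Finset.sum_congr rfl (fun z _ => (key z).symm), Finset.sum_const, card_univ,
    smul_eq_mul, mul_comm]

def hashHom (R : Type) [AddCommGroup R] (n : ℕ) (σ : Fin n → Bool) :
    ((Fin n → R) × (Fin n → R)) →+ R :=
  AddMonoidHom.mk' (fun v => ∑ i, if σ i then v.2 i else v.1 i) (by
    intro a b
    rw [← Finset.sum_add_distrib]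
    refine Finset.sum_congr rfl fun i _ => ?_
    by_cases h : σ i <;> simp [h])

lemma hashHom_surj {R : Type} [AddCommGroup R] [DecidableEq R] {n : ℕ} (hn : 1 ≤ n)
    (σ : Fin n → Bool) : Function.Surjective (hashHom R n σ) := by
  intro y
  refine ⟨(Pi.single ⟨0, hn⟩ y, Pi.single ⟨0, hn⟩ y), ?_⟩
  show (∑ i, if σ i then ((Pi.single (⟨0,hn⟩ : Fin n) y : Fin n → R), (Pi.single (⟨0,hn⟩ : Fin n) y : Fin n → R)).2 i
      else ((Pi.single (⟨0,hn⟩ : Fin n) y : Fin n → R), (Pi.single (⟨0,hn⟩ : Fin n) y : Fin n → R)).1 i) = y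
  have hcong : ∀ i ∈ univ, (if σ i then ((Pi.single (⟨0,hn⟩ : Fin n) y : Fin n → R), (Pi.single (⟨0,hn⟩ : Fin n) y : Fin n → R)).2 i
      else ((Pi.single (⟨0,hn⟩ : Fin n) y : Fin n → R), (Pi.single (⟨0,hn⟩ : Fin n) y : Fin n → R)).1 i)
      = (Pi.single (⟨0,hn⟩ : Fin n) y : Fin n → R) i := by
    intro i _; by_cases h : σ i <;> simp [h]
  rw [Finset.sum_congr rfl hcong]
  simp

lemma pairHom_surj {R : Type} [AddCommGroup R] [DecidableEq R] {n : ℕ}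
    (σ τ : Fin n → Bool) (hστ : σ ≠ τ) :
    Function.Surjective ((hashHom R n σ).prod (hashHom R n τ)) := by
  obtain ⟨i, hi⟩ := Function.ne_iff.mp hστ
  rintro ⟨a, b⟩
  refine ⟨(Pi.single i (if σ i then b else a), Pi.single i (if σ i then a else b)), ?_⟩
  have key : ∀ (ρ : Fin n → Bool) (c : R), (if ρ i then (if σ i then a else b)
        else (if σ i then b else a)) = c →
      (hashHom R n ρ) (Pi.single i (if σ i then b else a), Pi.single i (if σ i then a else b))
        = c := by
    intro ρ c hc
    show (∑ j, if ρ j then _ else _) = c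
    rw [Finset.sum_eq_single i]
    · simpa using hc
    · intro j _ hj
      by_cases h : ρ j <;> simp [h, Pi.single_eq_of_ne hj]
    · simp
  have h1 : (hashHom R n σ) _ = a := key σ a (by by_cases h : σ i <;> simp [h])
  have h2 : (hashHom R n τ) _ = b := key τ b (by
    by_cases h : σ i <;> by_cases h' : τ i <;> simp_all)
  exact Prod.ext h1 h2

/-- Leftover-hash-lemma bound: if `n > log₂ |R| + k` then for every `x ∈ R`
the statistical distance between `S_x^{R,n}` and the uniform distribution on
`Rⁿ × Rⁿ` is at most `(1/2)·2^{-(n - log₂|R|)/2} ≤ 2^{-Ω(k)}`. -/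
theorem sd_Sx_le
    (R : Type) [Fintype R] [AddCommGroup R] [DecidableEq R]
    (n k : ℕ) (hn : 1 ≤ n)
    (h : (n : ℝ) > Real.logb 2 (Fintype.card R) + k) (x : R) :
    SD (Sprob R n x)
        (fun _ : (Fin n → R) × (Fin n → R) =>
          1 / (Fintype.card R : ℝ) ^ (2 * n))
      ≤ (1 / 2) * (2 : ℝ) ^ (-(((n : ℝ) - Real.logb 2 (Fintype.card R)) / 2)) := by
  classical
  set c : ℝ := (Fintype.card R : ℝ) with hc
  have hcR : 0 < Fintype.card R := Fintype.card_pos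
  have hc0 : (0:ℝ) < c := by rw [hc]; exact_mod_cast hcR
  have hA0 : (0:ℝ) < c ^ (2*n) := pow_pos hc0 _
  set A : ℝ := c ^ (2*n) with hA
  have hcardV : (Fintype.card ((Fin n → R) × (Fin n → R)) : ℝ) = A := by
    rw [hA, hc]
    push_cast
    simp [two_mul, pow_add]
  have hpow1 : c ^ (2*n-1) = A / c := by
    rw [eq_div_iff (ne_of_gt hc0), hA, ← pow_succ]
    congr 1; omega
  -- the indicator function
  set p : (Fin n → Bool) → ((Fin n → R) × (Fin n → R)) → ℝ :=
    fun σ v => if hashHom R n σ v = x then (1:ℝ) else 0 with hp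
  have S1 : ∀ σ : Fin n → Bool, ∑ v, p σ v = A / c := by
    intro σ
    rw [hp]
    rw [Finset.sum_boole]
    have hnat := fiber_card_mul (hashHom R n σ) (hashHom_surj hn σ) x
    have hreal : ((univ.filter (fun v => hashHom R n σ v = x)).card : ℝ) * c = A := by
      rw [← hcardV, hc]; exact_mod_cast hnat
    field_simp at hreal ⊢
    linarith [hreal]
  have S2 : ∀ σ τ : Fin n → Bool, σ ≠ τ → ∑ v, p σ v * p τ v = A / c^2 := by
    intro σ τ hστ
    have hrw : ∀ v : (Fin n → R) × (Fin n → R), p σ v * p τ v =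
        if ((hashHom R n σ).prod (hashHom R n τ)) v = (x, x) then (1:ℝ) else 0 := by
      intro v
      rw [hp]
      simp only [AddMonoidHom.prod_apply, Prod.mk.injEq]
      by_cases h1 : hashHom R n σ v = x <;> by_cases h2 : hashHom R n τ v = x <;>
        simp [h1, h2]
    rw [Finset.sum_congr rfl (fun v _ => hrw v), Finset.sum_boole]
    have hnat := fiber_card_mul ((hashHom R n σ).prod (hashHom R n τ))
      (pairHom_surj σ τ hστ) (x, x)
    rw [Fintype.card_prod] at hnat
    have hreal : ((univ.filter (fun v => ((hashHom R n σ).prod (hashHom R n τ)) v = (x,x))).card : ℝ) * c^2 = A := by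
      rw [← hcardV, hc]; push_cast [← hnat]; ring
    field_simp at hreal ⊢
    linarith [hreal]
  set N : ((Fin n → R) × (Fin n → R)) → ℝ := fun v => ∑ σ, p σ v with hN
  have hcard2 : ((Fintype.card (Fin n → Bool)) : ℝ) = 2^n := by simp
  have T1 : ∑ v, N v = 2^n * (A/c) := by
    rw [hN]
    rw [Finset.sum_comm]
    rw [Finset.sum_congr rfl (fun σ _ => S1 σ), Finset.sum_const, card_univ, nsmul_eq_mul,
      hcard2]
  have T2 : ∑ v, (N v)^2 = 2^n * (A/c) + (2^n * (2^n - 1)) * (A/c^2) := by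
    have hsq : ∀ v, (N v)^2 = ∑ σ, ∑ τ, p σ v * p τ v := by
      intro v
      rw [hN, sq, Finset.sum_mul_sum]
    rw [Finset.sum_congr rfl (fun v _ => hsq v), Finset.sum_comm]
    have inner : ∀ σ : Fin n → Bool, ∑ v, ∑ τ, p σ v * p τ v
        = A/c + ((2:ℝ)^n - 1) * (A/c^2) := by
      intro σ
      rw [Finset.sum_comm]
      have inner2 : ∀ τ : Fin n → Bool, ∑ v, p σ v * p τ v
          = (A/c^2) + (if σ = τ then A/c - A/c^2 else 0) := by
        intro τ
        by_cases hστ : σ = τ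
        · subst hστ
          have : ∀ v, p σ v * p σ v = p σ v := by
            intro v; rw [hp]; by_cases h1 : hashHom R n σ v = x <;> simp [h1]
          rw [Finset.sum_congr rfl (fun v _ => this v), S1 σ]
          simp
        · rw [S2 σ τ hστ]; simp [hστ]
      rw [Finset.sum_congr rfl (fun τ _ => inner2 τ), Finset.sum_add_distrib,
        Finset.sum_const, card_univ, nsmul_eq_mul, hcard2, Finset.sum_ite_eq univ σ,
        if_pos (mem_univ σ)]
      ring
    rw [Finset.sum_congr rfl (fun σ _ => inner σ), Finset.sum_const, card_univ,
      nsmul_eq_mul, hcard2]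
    ring
  -- variance bound
  set μ : ℝ := 2^n / c with hμ
  have h2n : (0:ℝ) < (2:ℝ)^n := by positivity
  have Var : ∑ v, (N v - μ)^2 ≤ 2^n * (A/c) := by
    have expand : ∑ v, (N v - μ)^2
        = (∑ v, (N v)^2) - 2*μ*(∑ v, N v)
          + (Fintype.card ((Fin n → R) × (Fin n → R)) : ℝ) * μ^2 := by
      rw [Finset.sum_congr rfl (fun v (_ : v ∈ univ) =>
        show (N v - μ)^2 = ((N v)^2 - 2*μ*N v + μ^2) from by ring)]
      rw [Finset.sum_add_distrib, Finset.sum_sub_distrib, ← Finset.mul_sum,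
        Finset.sum_const, card_univ, nsmul_eq_mul]
    rw [expand, hcardV, T1, T2, hμ]
    have heq : 2^n * (A/c) + (2^n*((2:ℝ)^n-1))*(A/c^2) - 2*(2^n/c)*(2^n*(A/c)) + A*(2^n/c)^2
        = 2^n*(A/c) - 2^n*(A/c^2) := by
      field_simp
      ring
    rw [heq]
    have hpos : (0:ℝ) ≤ 2^n * (A/c^2) := by positivity
    linarith
  -- Cauchy–Schwarz
  have CS : (∑ v, |N v - μ|) ≤ A * Real.sqrt (2^n / c) := by
    have h1 : (∑ v, |N v - μ|)^2
        ≤ (Fintype.card ((Fin n → R) × (Fin n → R)) : ℝ) * ∑ v, |N v - μ|^2 := by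
      have := sq_sum_le_card_mul_sum_sq (s := (univ : Finset ((Fin n → R) × (Fin n → R))))
        (f := fun v => |N v - μ|)
      simpa [card_univ] using this
    simp only [sq_abs] at h1
    rw [hcardV] at h1
    have ha : 0 ≤ ∑ v, |N v - μ| := Finset.sum_nonneg fun v _ => abs_nonneg _
    have hb : (0:ℝ) ≤ A * Real.sqrt (2^n/c) := by positivity
    have h2 : (∑ v, |N v - μ|)^2 ≤ (A * Real.sqrt (2^n/c))^2 := by
      rw [mul_pow, Real.sq_sqrt (by positivity : (0:ℝ) ≤ 2^n/c)]
      calc (∑ v, |N v - μ|)^2 ≤ A * ∑ v, (N v - μ)^2 := h1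
        _ ≤ A * (2^n * (A/c)) := mul_le_mul_of_nonneg_left Var hA0.le
        _ = A^2 * (2^n/c) := by ring
    calc ∑ v, |N v - μ| = Real.sqrt ((∑ v, |N v - μ|)^2) := (Real.sqrt_sq ha).symm
      _ ≤ Real.sqrt ((A * Real.sqrt (2^n/c))^2) := Real.sqrt_le_sqrt h2
      _ = A * Real.sqrt (2^n/c) := Real.sqrt_sq hb
  -- pointwise difference
  have hden : (0:ℝ) < 2^n * (A/c) := by positivity
  have pt : ∀ v, Sprob R n x v - 1 / A = (N v - μ) / (2^n * (A/c)) := by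
    intro v
    have hS : Sprob R n x v = N v / (2^n * (A/c)) := by
      show (∑ σ : Fin n → Bool,
          if (∑ i, if σ i then v.2 i else v.1 i) = x then (1 : ℝ) else 0) /
        (2 ^ n * (Fintype.card R : ℝ) ^ (2 * n - 1)) = N v / (2^n * (A/c))
      rw [← hc, hpow1]
      rfl
    rw [hS, hμ, hA]
    field_simp
  have sumabs : ∑ v, |Sprob R n x v - 1/A| = (∑ v, |N v - μ|) / (2^n * (A/c)) := by
    rw [Finset.sum_div]
    refine Finset.sum_congr rfl fun v _ => ?_
    rw [pt v, abs_div, abs_of_pos hden]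
  -- final bound
  have final : (∑ v, |N v - μ|) / (2^n * (A/c)) ≤ Real.sqrt (c / 2^n) := by
    rw [div_le_iff₀ hden]
    have key : A * Real.sqrt (2^n/c) = Real.sqrt (c/2^n) * (2^n * (A/c)) := by
      have e1 : Real.sqrt ((2:ℝ)^n/c) = Real.sqrt ((c/2^n) * ((2:ℝ)^n/c)^2) := by
        congr 1
        field_simp
      rw [e1, Real.sqrt_mul (by positivity : (0:ℝ) ≤ c/2^n),
        Real.sqrt_sq (by positivity : (0:ℝ) ≤ (2:ℝ)^n/c)]
      field_simp
    calc ∑ v, |N v - μ| ≤ A * Real.sqrt (2^n/c) := CS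
      _ = Real.sqrt (c/2^n) * (2^n * (A/c)) := key
  have rpowEq : Real.sqrt (c/2^n) = (2:ℝ) ^ (-(((n:ℝ) - Real.logb 2 c)/2)) := by
    have hc2 : c / 2^n = (2:ℝ) ^ ((Real.logb 2 c - (n:ℝ))) := by
      rw [Real.rpow_sub (by norm_num : (0:ℝ) < 2),
        Real.rpow_logb (by norm_num) (by norm_num) hc0, Real.rpow_natCast]
    rw [hc2, Real.sqrt_eq_rpow, ← Real.rpow_mul (by norm_num : (0:ℝ) ≤ 2)]
    congr 1
    ring
  have hSDdef : SD (Sprob R n x) (fun _ : (Fin n → R) × (Fin n → R) => 1 / A)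
      = (∑ v, |Sprob R n x v - 1/A|) / 2 := rfl
  rw [hSDdef, sumabs, ← rpowEq]
  linarith
end

section
/- The statistically hiding encoding distributions are symmetric under translation: for every α ∈ R there is a bijection π_α on R^n × R^n such that for every x ∈ R, the probability that S_x^{R,n} outputs (v^0,v^1) equals the probability that S_{x+α}^{R,n} outputs π_α(v^0,v^1). Consequently, all distributions S_x^{R,n} have the same statistical distance to the uniform distribution on R^n × R^n. -/
open Finset

/-- Translation symmetry of the noisy encodings: the map `π_α` adding `α` to the
first coordinate of both vectors is a bijection carrying the distribution
`S_x^{R,n}` to `S_{x+α}^{R,n}`; consequently all `S_x^{R,n}` are at the same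
statistical distance from uniform. -/
theorem Sx_translation_symmetric
    (R : Type) [Fintype R] [AddCommGroup R] [DecidableEq R]
    (n : ℕ) (hn : 0 < n) :
    (∀ α : R, Function.Bijective
        (fun v : (Fin n → R) × (Fin n → R) =>
          (Function.update v.1 ⟨0, hn⟩ (v.1 ⟨0, hn⟩ + α),
           Function.update v.2 ⟨0, hn⟩ (v.2 ⟨0, hn⟩ + α))))
    ∧ (∀ (α x : R) (v : (Fin n → R) × (Fin n → R)),
        Sprob R n x v
          = Sprob R n (x + α)
              (Function.update v.1 ⟨0, hn⟩ (v.1 ⟨0, hn⟩ + α),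
               Function.update v.2 ⟨0, hn⟩ (v.2 ⟨0, hn⟩ + α)))
    ∧ (∀ x y : R,
        SD (Sprob R n x)
            (fun _ : (Fin n → R) × (Fin n → R) =>
              1 / (Fintype.card R : ℝ) ^ (2 * n))
        = SD (Sprob R n y)
            (fun _ : (Fin n → R) × (Fin n → R) =>
              1 / (Fintype.card R : ℝ) ^ (2 * n))) := by
  set i0 : Fin n := ⟨0, hn⟩
  have hbij : ∀ α : R, Function.Bijective
      (fun v : (Fin n → R) × (Fin n → R) =>
        (Function.update v.1 i0 (v.1 i0 + α),
         Function.update v.2 i0 (v.2 i0 + α))) := by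
    intro α
    rw [Function.bijective_iff_has_inverse]
    refine ⟨fun v => (Function.update v.1 i0 (v.1 i0 - α),
        Function.update v.2 i0 (v.2 i0 - α)), ?_, ?_⟩ <;>
      intro v <;>
      refine Prod.ext ?_ ?_ <;>
      · funext i
        by_cases h : i = i0 <;> simp [h, Function.update]
  have hkey : ∀ (α : R) (σ : Fin n → Bool) (v : (Fin n → R) × (Fin n → R)),
      (∑ i, if σ i then Function.update v.2 i0 (v.2 i0 + α) i
        else Function.update v.1 i0 (v.1 i0 + α) i)
      = (∑ i, if σ i then v.2 i else v.1 i) + α := by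
    intro α σ v
    rw [← Finset.add_sum_erase _ _ (mem_univ i0),
        ← Finset.add_sum_erase _ (fun i => if σ i then v.2 i else v.1 i) (mem_univ i0)]
    have h1 : (if σ i0 then Function.update v.2 i0 (v.2 i0 + α) i0
        else Function.update v.1 i0 (v.1 i0 + α) i0)
        = (if σ i0 then v.2 i0 else v.1 i0) + α := by
      by_cases h : σ i0 <;> simp [h]
    have h2 : (∑ i ∈ univ.erase i0, if σ i then Function.update v.2 i0 (v.2 i0 + α) i
        else Function.update v.1 i0 (v.1 i0 + α) i)
        = ∑ i ∈ univ.erase i0, if σ i then v.2 i else v.1 i :=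
      Finset.sum_congr rfl (fun i hi => by
        have h3 : i ≠ i0 := Finset.ne_of_mem_erase hi
        simp [Function.update_of_ne h3])
    rw [h1, h2]
    abel
  have hprob : ∀ (α x : R) (v : (Fin n → R) × (Fin n → R)),
      Sprob R n x v = Sprob R n (x + α)
        (Function.update v.1 i0 (v.1 i0 + α),
         Function.update v.2 i0 (v.2 i0 + α)) := by
    intro α x v
    unfold Sprob
    congr 1
    refine Finset.sum_congr rfl fun σ _ => ?_
    rw [hkey α σ v]
    congr 1
    simp [add_left_inj]
  refine ⟨hbij, hprob, ?_⟩
  intro x y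
  unfold SD
  congr 1
  have := (hbij (y - x)).sum_comp
    (fun w : (Fin n → R) × (Fin n → R) =>
      |Sprob R n y w - 1 / (Fintype.card R : ℝ) ^ (2 * n)|)
  rw [← this]
  refine Finset.sum_congr rfl fun v _ => ?_
  rw [hprob (y - x) x v]
  simp
end

section
/- Packed secret sharing privacy: for any two blocks s, s' ∈ F^ℓ and any set T of at most t = δ − ℓ + 1 server indices, the distribution of the shares (p(e_i))_{i∈T}, where p is a uniformly random polynomial of degree ≤ δ subject to p(e_{1−j}) = s_j for j = 1,…,ℓ, is identical to the corresponding distribution for s'. Equivalently, for any values (c_i)_{i∈T} ∈ F^T, the number of degree-≤δ polynomials consistent with the block s and the share values (c_i)_{i∈T} equals |F|^{δ+1−ℓ−|T|}, independently of s and the c_i. -/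
open Finset

lemma fiber_card_aux {F : Type} [Field F] [Fintype F] [DecidableEq F]
    {α β : Type} [Fintype α] [Fintype β] [DecidableEq α] [DecidableEq β]
    (E : (α → F) →ₗ[F] (β → F)) (hE : Function.Surjective E)
    (hcard : Fintype.card β ≤ Fintype.card α) (w : β → F) :
    (Finset.univ.filter (fun a => E a = w)).card
      = Fintype.card F ^ (Fintype.card α - Fintype.card β) := by
  classical
  obtain ⟨a₀, ha₀⟩ := hE w
  have hker : Nat.card (LinearMap.ker E) = Fintype.card F ^ (Fintype.card α - Fintype.card β) := by
    have h1 := Submodule.card_eq_card_quotient_mul_card (LinearMap.ker E)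
    have h2 : Nat.card ((α → F) ⧸ LinearMap.ker E) = Nat.card (β → F) :=
      Nat.card_congr (E.quotKerEquivOfSurjective hE).toEquiv
    rw [h2] at h1
    have hα : Nat.card (α → F) = Fintype.card F ^ Fintype.card α := by
      simp [Nat.card_eq_fintype_card, Fintype.card_fun]
    have hβ : Nat.card (β → F) = Fintype.card F ^ Fintype.card β := by
      simp [Nat.card_eq_fintype_card, Fintype.card_fun]
    rw [hα, hβ] at h1
    have hpos : (0:ℕ) < Fintype.card F ^ Fintype.card β := by positivity
    have hpow : Fintype.card F ^ Fintype.card α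
        = Fintype.card F ^ (Fintype.card α - Fintype.card β) * Fintype.card F ^ Fintype.card β := by
      rw [← pow_add, Nat.sub_add_cancel hcard]
    rw [hpow] at h1
    exact (Nat.eq_of_mul_eq_mul_right hpos (by linarith)).symm
  have hequiv : {a : α → F // E a = w} ≃ LinearMap.ker E := by
    refine ⟨fun x => ⟨x.1 - a₀, ?_⟩, fun y => ⟨y.1 + a₀, ?_⟩, fun x => by simp, fun y => by simp⟩
    · simp [LinearMap.mem_ker, map_sub, x.2, ha₀]
    · simp [map_add, y.2, ha₀]
  rw [← Fintype.card_subtype]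
  rw [← Nat.card_eq_fintype_card, Nat.card_congr hequiv, hker]

/-- Packed secret sharing privacy (counting form): for any block `s ∈ F^ℓ`,
any set `T` of at most `δ − ℓ + 1` servers, and any target share values `c`,
the number of polynomials of degree `≤ δ` (given by their coefficient vector)
consistent with the block `s` and the shares `(c_i)_{i∈T}` equals
`|F|^(δ+1−ℓ−|T|)`, independently of `s` and `c`. -/
theorem packed_sharing_privacy
    (F : Type) [Field F] [Fintype F] [DecidableEq F]
    (n ℓ δ : ℕ) (hl : 1 ≤ ℓ) (hlδ : ℓ ≤ δ + 1)
    (e : Fin ℓ ⊕ Fin n → F) (he : Function.Injective e)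
    (T : Finset (Fin n)) (hT : T.card ≤ δ + 1 - ℓ)
    (s : Fin ℓ → F) (c : Fin n → F) :
    (Finset.univ.filter (fun a : Fin (δ + 1) → F =>
        (∀ j : Fin ℓ, ∑ i, a i * (e (Sum.inl j)) ^ (i : ℕ) = s j) ∧
        (∀ i ∈ T, ∑ m, a m * (e (Sum.inr i)) ^ (m : ℕ) = c i))).card
      = Fintype.card F ^ (δ + 1 - ℓ - T.card) := by
  classical
  set ι := (Fin ℓ ⊕ {x : Fin n // x ∈ T}) with hι
  let v : ι → F := Sum.elim (fun j => e (Sum.inl j)) (fun i => e (Sum.inr i.1))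
  have hv : Function.Injective v := by
    intro x y hxy
    cases x with
    | inl j => cases y with
      | inl j' => exact congrArg Sum.inl (Sum.inl_injective (he hxy))
      | inr i' => exact absurd (he hxy) (by simp)
    | inr i => cases y with
      | inl j' => exact absurd (he hxy) (by simp)
      | inr i' => exact congrArg Sum.inr (Subtype.ext (Sum.inr_injective (he hxy)))
  let E : (Fin (δ + 1) → F) →ₗ[F] (ι → F) :=
    { toFun := fun a x => ∑ i, a i * (v x) ^ (i : ℕ)
      map_add' := by
        intro a b; funext x; simp [add_mul, Finset.sum_add_distrib]
      map_smul' := by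
        intro r a; funext x; simp [Finset.mul_sum, mul_assoc] }
  let w : ι → F := Sum.elim s (fun i => c i.1)
  have hcardι : Fintype.card ι = ℓ + T.card := by
    simp [hι, Fintype.card_sum, Fintype.card_coe]
  have hle : ℓ + T.card ≤ δ + 1 := by omega
  have hsurj : Function.Surjective E := by
    intro t
    have hinj : Set.InjOn v (Finset.univ : Finset ι) := Function.Injective.injOn hv
    set p := Lagrange.interpolate (Finset.univ : Finset ι) v t with hp
    have hdeg : p.degree < (δ + 1 : ℕ) := by
      refine lt_of_lt_of_le (Lagrange.degree_interpolate_lt t hinj) ?_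
      rw [Finset.card_univ, hcardι]
      exact_mod_cast hle
    have hnat : p.natDegree < δ + 1 := by
      by_cases hp0 : p = 0
      · simp [hp0]
      · exact (Polynomial.natDegree_lt_iff_degree_lt hp0).mpr hdeg
    refine ⟨fun i => p.coeff i, ?_⟩
    funext x
    have : (∑ i : Fin (δ + 1), p.coeff i * (v x) ^ (i : ℕ)) = p.eval (v x) := by
      rw [Polynomial.eval_eq_sum_range' hnat, Fin.sum_univ_eq_sum_range
        (fun i => p.coeff i * (v x) ^ i)]
    show (∑ i : Fin (δ + 1), p.coeff i * (v x) ^ (i : ℕ)) = t x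
    rw [this, hp, Lagrange.eval_interpolate_at_node t hinj (Finset.mem_univ x)]
  have hset : (Finset.univ.filter (fun a : Fin (δ + 1) → F =>
        (∀ j : Fin ℓ, ∑ i, a i * (e (Sum.inl j)) ^ (i : ℕ) = s j) ∧
        (∀ i ∈ T, ∑ m, a m * (e (Sum.inr i)) ^ (m : ℕ) = c i)))
      = Finset.univ.filter (fun a => E a = w) := by
    apply Finset.filter_congr
    intro a _
    constructor
    · rintro ⟨h1, h2⟩
      funext x
      cases x with
      | inl j => exact h1 j
      | inr i => exact h2 i.1 i.2
    · intro h
      constructor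
      · intro j; exact congrFun h (Sum.inl j)
      · intro i hi; exact congrFun h (Sum.inr ⟨i, hi⟩)
  rw [hset, fiber_card_aux E hsurj (by rw [hcardι, Fintype.card_fin]; exact hle), hcardι, Fintype.card_fin]
  congr 1
  omega
end

section
/- Counting argument for modular blinding: let M ≥ 1, k ≥ 1, and fix a, b, r ∈ Z_M (viewed as integers in [0, M−1]), and let w = ab + r mod M. Let D₁ be the distribution of ab + r + sM and D₂ the distribution of w + sM, where s is uniform in {0, 1, …, 2·2^k·M − 1}. Then the statistical distance between D₁ and D₂ is at most 2^{−k}. -/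
lemma filt_eq (N M u x : ℤ) (hM : 0 < M) :
    (Finset.Ico (0:ℤ) N).filter (fun s => u + s * M = x) =
    if M ∣ (x - u) ∧ 0 ≤ (x - u) / M ∧ (x - u) / M < N then {(x - u) / M} else ∅ := by
  ext s
  simp only [Finset.mem_filter, Finset.mem_Ico]
  split
  next h =>
    obtain ⟨hd, h0, hN⟩ := h
    simp only [Finset.mem_singleton]
    constructor
    · rintro ⟨⟨h0s, hNs⟩, heq⟩
      have hsm : s * M = x - u := by linarith
      rw [← hsm, Int.mul_ediv_cancel _ hM.ne']
    · rintro rfl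
      refine ⟨⟨h0, hN⟩, ?_⟩
      have := Int.ediv_mul_cancel hd
      linarith
  next h =>
    simp only [Finset.notMem_empty, iff_false]
    rintro ⟨⟨h0s, hNs⟩, heq⟩
    have hsm : s * M = x - u := by linarith
    apply h
    have hdvd : M ∣ x - u := ⟨s, by linarith⟩
    have hs : (x - u) / M = s := by rw [← hsm, Int.mul_ediv_cancel _ hM.ne']
    exact ⟨hdvd, by omega⟩

/-- Counting argument for modular blinding: with `a,b,r ∈ [0,M−1]`,
`w = ab + r mod M`, and `s` uniform in `{0,…,2·2^k·M − 1}`, the statistical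
distance between the distributions of `ab + r + sM` and `w + sM` is at most
`2^{−k}`. -/
theorem blinding_statistical_distance
    (M : ℤ) (k : ℕ) (hM : 1 ≤ M) (hk : 1 ≤ k)
    (a b r : ℤ) (ha : 0 ≤ a ∧ a < M) (hb : 0 ≤ b ∧ b < M) (hr : 0 ≤ r ∧ r < M) :
    (1 / 2 : ℝ) *
      ∑' x : ℤ,
        |(((Finset.Ico (0 : ℤ) (2 * 2 ^ k * M)).filter
              (fun s => a * b + r + s * M = x)).card : ℝ) / ((2 * 2 ^ k * M : ℤ) : ℝ)
          - (((Finset.Ico (0 : ℤ) (2 * 2 ^ k * M)).filter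
              (fun s => (a * b + r) % M + s * M = x)).card : ℝ) / ((2 * 2 ^ k * M : ℤ) : ℝ)|
      ≤ (2 : ℝ) ^ (-(k : ℤ)) := by
  have hM0 : 0 < M := hM
  set N : ℤ := 2 * 2 ^ k * M with hNdef
  have hN : 0 < N := by positivity
  have h2k : (1:ℤ) ≤ 2 ^ k := one_le_pow₀ (by norm_num : (1:ℤ) ≤ 2)
  have hMN : M < N := by nlinarith
  set w : ℤ := (a * b + r) % M with hw
  set c : ℤ := (a * b + r) / M with hc
  have habr0 : 0 ≤ a * b + r := by nlinarith [ha.1, hb.1, hr.1]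
  have hc0 : 0 ≤ c := Int.ediv_nonneg habr0 hM0.le
  have hcM : c < M := by
    rw [hc, Int.ediv_lt_iff_lt_mul hM0]
    nlinarith [ha.1, hb.1, hr.1, ha.2, hb.2, hr.2]
  have hcN : c < N := hcM.trans hMN
  have hdecomp : a * b + r = M * c + w := by
    rw [hc, hw]; exact (Int.mul_ediv_add_emod _ _).symm
  set g : ℤ → ℝ := fun x =>
    |(((Finset.Ico (0 : ℤ) N).filter
          (fun s => a * b + r + s * M = x)).card : ℝ) / ((N : ℤ) : ℝ)
      - (((Finset.Ico (0 : ℤ) N).filter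
          (fun s => w + s * M = x)).card : ℝ) / ((N : ℤ) : ℝ)| with hg
  set F : Finset ℤ := ((Finset.Ico (0:ℤ) c) ∪ (Finset.Ico N (N + c))).image
      (fun t => w + t * M) with hF
  have hsupp : ∀ x ∉ F, g x = 0 := by
    intro x hx
    have hcards : ((Finset.Ico (0:ℤ) N).filter (fun s => a * b + r + s * M = x)).card
        = ((Finset.Ico (0:ℤ) N).filter (fun s => w + s * M = x)).card := by
      rw [filt_eq N M (a*b+r) x hM0, filt_eq N M w x hM0]
      by_cases hdvd : M ∣ x - w
      · obtain ⟨d, hd⟩ := hdvd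
        have hdF : ¬ ((0 ≤ d ∧ d < c) ∨ (N ≤ d ∧ d < N + c)) := by
          intro hmem
          apply hx
          rw [hF]
          refine Finset.mem_image.mpr ⟨d, ?_, by linarith⟩
          simp only [Finset.mem_union, Finset.mem_Ico]
          exact hmem
        have e2 : x - (a*b+r) = M * (d - c) := by
          have := mul_sub M d c
          rw [hdecomp]; linarith
        have q1 : (x - (a*b+r))/M = d - c := by
          rw [e2, Int.mul_ediv_cancel_left _ hM0.ne']
        have q2 : (x - w)/M = d := by
          rw [hd, Int.mul_ediv_cancel_left _ hM0.ne']
        have hiff : (M ∣ x - (a*b+r) ∧ 0 ≤ (x-(a*b+r))/M ∧ (x-(a*b+r))/M < N) ↔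
            (M ∣ x - w ∧ 0 ≤ (x-w)/M ∧ (x-w)/M < N) := by
          rw [q1, q2]
          constructor
          · rintro ⟨-, h1, h2⟩; exact ⟨⟨d, hd⟩, by omega, by omega⟩
          · rintro ⟨-, h1, h2⟩; exact ⟨⟨d - c, e2⟩, by omega, by omega⟩
        by_cases hcond : M ∣ x - w ∧ 0 ≤ (x-w)/M ∧ (x-w)/M < N
        · rw [if_pos (hiff.mpr hcond), if_pos hcond]; simp
        · rw [if_neg (fun h => hcond (hiff.mp h)), if_neg hcond]
      · have hdvd' : ¬ M ∣ x - (a*b+r) := by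
          rintro ⟨e, he⟩
          exact hdvd ⟨e + c, by linarith [mul_add M e c]⟩
        rw [if_neg (fun h => hdvd' h.1), if_neg (fun h => hdvd h.1)]
    rw [hg]
    simp only [hcards, sub_self, abs_zero]
  have hNR : (0:ℝ) < ((N:ℤ):ℝ) := by exact_mod_cast hN
  have hgle : ∀ x ∈ F, g x ≤ 1 / ((N:ℤ):ℝ) := by
    intro x _
    rw [hg]
    simp only
    rw [filt_eq N M (a*b+r) x hM0, filt_eq N M w x hM0]
    split_ifs <;> simp [abs_inv, abs_of_pos hNR] <;> exact hN.le
  have htsum : ∑' x : ℤ, g x = ∑ x ∈ F, g x := tsum_eq_sum hsupp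
  rw [htsum]
  have hsum_le : ∑ x ∈ F, g x ≤ F.card • (1 / ((N:ℤ):ℝ)) :=
    Finset.sum_le_card_nsmul F g _ hgle
  rw [nsmul_eq_mul] at hsum_le
  have hFcard : (F.card : ℝ) ≤ 2 * ((M:ℝ) - 1) := by
    have h1 : F.card ≤ c.toNat + c.toNat := by
      refine le_trans Finset.card_image_le ?_
      refine le_trans (Finset.card_union_le _ _) ?_
      simp [Int.card_Ico]
    have h2 : (c.toNat : ℝ) ≤ (M:ℝ) - 1 := by
      have hct : (c.toNat : ℤ) = c := Int.toNat_of_nonneg hc0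
      have : (c.toNat : ℤ) ≤ M - 1 := by omega
      exact_mod_cast this
    calc (F.card : ℝ) ≤ (c.toNat : ℝ) + (c.toNat : ℝ) := by exact_mod_cast h1
      _ ≤ 2 * ((M:ℝ) - 1) := by linarith
  have hfin : (1/2:ℝ) * (2 * ((M:ℝ) - 1) * (1 / ((N:ℤ):ℝ))) ≤ (2:ℝ) ^ (-(k:ℤ)) := by
    rw [zpow_neg, zpow_natCast]
    have hNR' : ((N:ℤ):ℝ) = 2 * 2^k * (M:ℝ) := by rw [hNdef]; push_cast; ring
    rw [hNR']
    have h2kR : (0:ℝ) < 2^k := by positivity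
    have hMR : (1:ℝ) ≤ (M:ℝ) := by exact_mod_cast hM
    have heq : (1/2:ℝ) * (2 * ((M:ℝ) - 1) * (1 / (2 * 2^k * (M:ℝ))))
        = ((M:ℝ) - 1) / (2 * 2^k * (M:ℝ)) := by ring
    rw [heq, inv_eq_one_div, div_le_div_iff₀ (by positivity) h2kR]
    nlinarith
  have hhalf : (0:ℝ) ≤ 1/2 := by norm_num
  have hstep : (1/2:ℝ) * ∑ x ∈ F, g x ≤ (1/2:ℝ) * (2 * ((M:ℝ) - 1) * (1 / ((N:ℤ):ℝ))) := by
    apply mul_le_mul_of_nonneg_left _ hhalf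
    calc ∑ x ∈ F, g x ≤ (F.card : ℝ) * (1 / ((N:ℤ):ℝ)) := hsum_le
      _ ≤ 2 * ((M:ℝ) - 1) * (1 / ((N:ℤ):ℝ)) := by
          apply mul_le_mul_of_nonneg_right hFcard
          positivity
  linarith
end
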